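/- arXiv:1402.1009 — 4 statements merged into one kernel-verified Lean document; each statement's English description precedes it below -/
import Mathlib

section
/- Let Σ be a finite set, μ a probability measure on Σ, ℓ : Σ → [0,∞), and R ∈ [0,2]. Then sup over probability measures ν on Σ with ||ν − μ||_TV ≤ R of Σ_x ℓ(x)ν(x) is at most (R/2)(max_x ℓ(x) − min_x ℓ(x)) + Σ_x ℓ(x)μ(x). -/
open Finset

/-- Finite `S`, pmf `μ`, nonneg `ℓ`, `R ∈ [0,2]`: any pmf `ν` with
`‖ν − μ‖_TV ≤ R` has expected value at most
`(R/2)(max ℓ − min ℓ) + ∑ ℓ μ`, i.e. the supremum is at most this bound. -/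
theorem robust_sup_le {S : Type*} [Fintype S] [Nonempty S]
    (μ ℓ : S → ℝ) (R : ℝ)
    (hμ0 : ∀ x, 0 ≤ μ x) (hμ1 : ∑ x, μ x = 1)
    (hℓ : ∀ x, 0 ≤ ℓ x) (hR0 : 0 ≤ R) (hR2 : R ≤ 2)
    (ν : S → ℝ) (hν0 : ∀ x, 0 ≤ ν x) (hν1 : ∑ x, ν x = 1)
    (htv : ∑ x, |ν x - μ x| ≤ R) :
    ∑ x, ℓ x * ν x ≤
      R / 2 * (univ.sup' univ_nonempty ℓ - univ.inf' univ_nonempty ℓ)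
        + ∑ x, ℓ x * μ x := by
  set M := univ.sup' univ_nonempty ℓ with hM
  set m := univ.inf' univ_nonempty ℓ with hm
  set c := (M + m) / 2 with hc
  have hmle : ∀ x, m ≤ ℓ x := fun x => inf'_le _ (mem_univ x)
  have hleM : ∀ x, ℓ x ≤ M := fun x => le_sup' _ (mem_univ x)
  have hmM : m ≤ M := le_trans (hmle (Classical.arbitrary S)) (hleM _)
  have key : ∑ x, ℓ x * ν x - ∑ x, ℓ x * μ x
      = ∑ x, (ℓ x - c) * (ν x - μ x) := by
    have : ∑ x, (ℓ x - c) * (ν x - μ x)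
        = (∑ x, ℓ x * ν x - ∑ x, ℓ x * μ x) - c * (∑ x, ν x - ∑ x, μ x) := by
      simp only [Finset.mul_sum, ← Finset.sum_sub_distrib]
      exact Finset.sum_congr rfl fun x _ => by ring
    rw [this, hν1, hμ1]; ring
  have hbound : ∑ x, (ℓ x - c) * (ν x - μ x) ≤ (M - m) / 2 * R := by
    calc ∑ x, (ℓ x - c) * (ν x - μ x)
        ≤ ∑ x, |(ℓ x - c) * (ν x - μ x)| :=
          Finset.sum_le_sum fun x _ => le_abs_self _
      _ ≤ ∑ x, (M - m) / 2 * |ν x - μ x| := by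
          apply Finset.sum_le_sum
          intro x _
          rw [abs_mul]
          apply mul_le_mul_of_nonneg_right _ (abs_nonneg _)
          rw [abs_le]
          constructor
          · have := hmle x; simp only [hc]; linarith
          · have := hleM x; simp only [hc]; linarith
      _ = (M - m) / 2 * ∑ x, |ν x - μ x| := by rw [Finset.mul_sum]
      _ ≤ (M - m) / 2 * R :=
          mul_le_mul_of_nonneg_left htv (by linarith)
  have : R / 2 * (M - m) = (M - m) / 2 * R := by ring
  linarith [key ▸ hbound]
end

section
/- Let Σ be a finite set, μ a probability measure on Σ, ℓ : Σ → [0,∞), and R ∈ [0,2] with R/2 ≤ min(1 − μ(Σ⁰), μ(Σ₀)), where Σ⁰ and Σ₀ are the sets where ℓ attains its maximum and minimum respectively. Then the supremum of Σ_x ℓ(x)ν(x) over probability measures ν with ||ν − μ||_TV ≤ R equals (R/2)(ℓ_max − ℓ_min) + Σ_x ℓ(x)μ(x), where ℓ_max = max_x ℓ(x) and ℓ_min = min_x ℓ(x). -/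
open Finset
open scoped Classical

/-- With `R/2 ≤ min(1 − μ(Σ⁰), μ(Σ₀))`, the supremum of `∑ ℓ ν` over pmfs `ν`
with `‖ν − μ‖_TV ≤ R` equals `(R/2)(ℓ_max − ℓ_min) + ∑ ℓ μ`. -/
theorem robust_sup_eq {S : Type*} [Fintype S] [Nonempty S]
    (μ ℓ : S → ℝ) (R : ℝ)
    (hμ0 : ∀ x, 0 ≤ μ x) (hμ1 : ∑ x, μ x = 1)
    (hℓ : ∀ x, 0 ≤ ℓ x) (hR0 : 0 ≤ R) (hR2 : R ≤ 2)
    (hR : R / 2 ≤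
      min (1 - ∑ x ∈ univ.filter (fun x => ℓ x = univ.sup' univ_nonempty ℓ), μ x)
          (∑ x ∈ univ.filter (fun x => ℓ x = univ.inf' univ_nonempty ℓ), μ x)) :
    sSup {r : ℝ | ∃ ν : S → ℝ, (∀ x, 0 ≤ ν x) ∧ (∑ x, ν x = 1) ∧
        (∑ x, |ν x - μ x| ≤ R) ∧ r = ∑ x, ℓ x * ν x}
      = R / 2 * (univ.sup' univ_nonempty ℓ - univ.inf' univ_nonempty ℓ)
          + ∑ x, ℓ x * μ x := by
  set L := univ.sup' univ_nonempty ℓ with hLdef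
  set l := univ.inf' univ_nonempty ℓ with hldef
  have hlx : ∀ x : S, l ≤ ℓ x := fun x => inf'_le _ (mem_univ x)
  have hxL : ∀ x : S, ℓ x ≤ L := fun x => le_sup' _ (mem_univ x)
  have hlL : l ≤ L := le_trans (hlx (Classical.arbitrary S)) (hxL _)
  -- upper bound
  have hub : ∀ r ∈ {r : ℝ | ∃ ν : S → ℝ, (∀ x, 0 ≤ ν x) ∧ (∑ x, ν x = 1) ∧
      (∑ x, |ν x - μ x| ≤ R) ∧ r = ∑ x, ℓ x * ν x},
      r ≤ R / 2 * (L - l) + ∑ x, ℓ x * μ x := by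
    rintro r ⟨ν, hν0, hν1, hTV, rfl⟩
    have key : ∑ x, ℓ x * ν x - ∑ x, ℓ x * μ x
        = ∑ x, (ℓ x - (L + l) / 2) * (ν x - μ x) := by
      have : ∑ x, (ℓ x - (L + l) / 2) * (ν x - μ x)
          = ∑ x, ℓ x * ν x - ∑ x, ℓ x * μ x
            - (L + l) / 2 * ((∑ x, ν x) - ∑ x, μ x) := by
        simp only [sub_mul, mul_sub, Finset.sum_sub_distrib, Finset.mul_sum]
        ring
      rw [this, hν1, hμ1, sub_self, mul_zero, sub_zero]
    have hbound : ∑ x, (ℓ x - (L + l) / 2) * (ν x - μ x) ≤ (L - l) / 2 * R := by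
      calc ∑ x, (ℓ x - (L + l) / 2) * (ν x - μ x)
          ≤ ∑ x, (L - l) / 2 * |ν x - μ x| := by
            apply Finset.sum_le_sum
            intro x _
            calc (ℓ x - (L + l) / 2) * (ν x - μ x)
                ≤ |(ℓ x - (L + l) / 2) * (ν x - μ x)| := le_abs_self _
              _ = |ℓ x - (L + l) / 2| * |ν x - μ x| := abs_mul _ _
              _ ≤ (L - l) / 2 * |ν x - μ x| := by
                  apply mul_le_mul_of_nonneg_right _ (abs_nonneg _)
                  rw [abs_le]
                  constructor <;> [linarith [hlx x]; linarith [hxL x]]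
        _ = (L - l) / 2 * ∑ x, |ν x - μ x| := by rw [Finset.mul_sum]
        _ ≤ (L - l) / 2 * R := by
            apply mul_le_mul_of_nonneg_left hTV; linarith
    nlinarith [key, hbound]
  -- membership
  have hmem : R / 2 * (L - l) + ∑ x, ℓ x * μ x ∈
      {r : ℝ | ∃ ν : S → ℝ, (∀ x, 0 ≤ ν x) ∧ (∑ x, ν x = 1) ∧
        (∑ x, |ν x - μ x| ≤ R) ∧ r = ∑ x, ℓ x * ν x} := by
    by_cases hc : L = l
    · refine ⟨μ, hμ0, hμ1, by simp [hR0], ?_⟩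
      rw [hc, sub_self, mul_zero, zero_add]
    by_cases hRz : R = 0
    · refine ⟨μ, hμ0, hμ1, by simp [hR0], ?_⟩
      rw [hRz]; ring
    · -- main construction
      have hRpos : 0 < R := lt_of_le_of_ne hR0 (Ne.symm hRz)
      set m := ∑ x ∈ univ.filter (fun x => ℓ x = l), μ x with hmdef
      have hRm : R / 2 ≤ m := le_trans hR (min_le_right _ _)
      have hmpos : 0 < m := lt_of_lt_of_le (by linarith) hRm
      obtain ⟨xs, -, hxs⟩ := Finset.exists_mem_eq_sup' univ_nonempty ℓ
      have hxsl : ℓ xs ≠ l := by rw [← hxs]; exact fun h => hc h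
      set ν : S → ℝ := fun x =>
        μ x - (if ℓ x = l then R / 2 * (μ x / m) else 0)
          + (if x = xs then R / 2 else 0) with hνdef
      have hν0 : ∀ x, 0 ≤ ν x := by
        intro x
        simp only [hνdef]
        by_cases h : ℓ x = l
        · rw [if_pos h]
          have h1 : R / 2 * (μ x / m) ≤ μ x := by
            rw [mul_div_assoc'] at *
            rw [div_le_iff₀ hmpos]
            nlinarith [hμ0 x]
          have : (0:ℝ) ≤ if x = xs then R / 2 else 0 := by positivity
          linarith
        · rw [if_neg h, sub_zero]
          have : (0:ℝ) ≤ if x = xs then R / 2 else 0 := by positivity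
          linarith [hμ0 x]
      have hsum_ite1 : ∑ x, (if ℓ x = l then R / 2 * (μ x / m) else 0) = R / 2 := by
        rw [← Finset.sum_filter]
        have : ∑ x ∈ univ.filter (fun x => ℓ x = l), R / 2 * (μ x / m)
            = R / 2 / m * ∑ x ∈ univ.filter (fun x => ℓ x = l), μ x := by
          rw [Finset.mul_sum]; apply Finset.sum_congr rfl; intros; ring
        rw [this, ← hmdef, div_mul_cancel₀ _ (ne_of_gt hmpos)]
      have hsum_ite2 : ∑ x, (if x = xs then R / 2 else (0:ℝ)) = R / 2 := by
        simp
      have hν1 : ∑ x, ν x = 1 := by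
        simp only [hνdef]
        rw [Finset.sum_add_distrib, Finset.sum_sub_distrib, hμ1, hsum_ite1, hsum_ite2]
        ring
      have hTV : ∑ x, |ν x - μ x| ≤ R := by
        have habs : ∀ x, |ν x - μ x|
            = (if ℓ x = l then R / 2 * (μ x / m) else 0)
              + (if x = xs then R / 2 else 0) := by
          intro x
          simp only [hνdef]
          by_cases h : ℓ x = l
          · have hne : x ≠ xs := fun he => hxsl (he ▸ h)
            simp only [if_pos h, if_neg hne, add_zero]
            rw [sub_sub_cancel_left, abs_neg, abs_of_nonneg (mul_nonneg (by positivity) (div_nonneg (hμ0 x) hmpos.le))]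
          · simp only [if_neg h, sub_zero, zero_add, add_sub_cancel_left]
            by_cases he : x = xs
            · simp only [if_pos he]; exact abs_of_nonneg (by positivity)
            · simp only [if_neg he, abs_zero]
        calc ∑ x, |ν x - μ x|
            = ∑ x, ((if ℓ x = l then R / 2 * (μ x / m) else 0)
              + (if x = xs then R / 2 else 0)) := Finset.sum_congr rfl (fun x _ => habs x)
          _ ≤ R := le_of_eq (by rw [Finset.sum_add_distrib, hsum_ite1, hsum_ite2]; ring)
      refine ⟨ν, hν0, hν1, hTV, ?_⟩
      have expand : ∀ x, ℓ x * ν x = ℓ x * μ x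
          - (if ℓ x = l then R / 2 * (μ x / m) * l else 0)
          + (if x = xs then R / 2 * L else 0) := by
        intro x
        simp only [hνdef]
        by_cases h : ℓ x = l
        · have hne : x ≠ xs := fun he => hxsl (he ▸ h)
          rw [if_pos h, if_neg hne, if_pos h, if_neg hne, h]; ring
        · rw [if_neg h, if_neg h]
          by_cases he : x = xs
          · rw [if_pos he, if_pos he, he, ← hxs]; ring
          · rw [if_neg he, if_neg he]; ring
      have h1 : ∑ x, (if ℓ x = l then R / 2 * (μ x / m) * l else (0:ℝ)) = R / 2 * l := by
        have : ∀ x, (if ℓ x = l then R / 2 * (μ x / m) * l else (0:ℝ))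
            = (if ℓ x = l then R / 2 * (μ x / m) else 0) * l := by
          intro x; by_cases h : ℓ x = l <;> simp [h]
        rw [Finset.sum_congr rfl (fun x _ => this x), ← Finset.sum_mul, hsum_ite1]
      have h2 : ∑ x, (if x = xs then R / 2 * L else (0:ℝ)) = R / 2 * L := by simp
      rw [Finset.sum_congr rfl (fun x _ => expand x), Finset.sum_add_distrib,
        Finset.sum_sub_distrib, h1, h2]
      ring
  exact IsGreatest.csSup_eq ⟨hmem, hub⟩
end

section
/- Let Σ be a finite set with at least two elements, ℓ : Σ → [0,∞) non-constant, μ a probability measure on Σ, and R ∈ [0,2] with R/2 ≤ min(1 − μ(Σ⁰), μ(Σ₀)). Define ν* by ν*(x) = μ(x) + (R/2)·μ(x)/μ(Σ⁰) for x ∈ Σ⁰ if μ(Σ⁰) > 0 (or placing mass R/2 on a fixed maximizer otherwise), ν*(x) = μ(x) − (R/2)·μ(x)/μ(Σ₀) for x ∈ Σ₀, and ν*(x) = μ(x) otherwise. Then ν* is a probability measure, ||ν* − μ||_TV = R, and Σ_x ℓ(x)ν*(x) = (R/2)(ℓ_max − ℓ_min) + Σ_x ℓ(x)μ(x). -/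
open Finset
open scoped Classical

/-- Explicit maximizing measure `ν*`: it is a pmf, lies at TV distance exactly `R`
from `μ`, and achieves the value `(R/2)(ℓ_max − ℓ_min) + ∑ ℓ μ`. -/
theorem maximizing_measure {S : Type*} [Fintype S] [Nonempty S]
    (μ ℓ : S → ℝ) (R : ℝ) (x0 : S)
    (hcard : 1 < Fintype.card S)
    (hnc : ∃ x y : S, ℓ x ≠ ℓ y)
    (hμ0 : ∀ x, 0 ≤ μ x) (hμ1 : ∑ x, μ x = 1)
    (hℓ : ∀ x, 0 ≤ ℓ x) (hR0 : 0 ≤ R) (hR2 : R ≤ 2)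
    (hx0 : ℓ x0 = univ.sup' univ_nonempty ℓ)
    (hR : R / 2 ≤
      min (1 - ∑ x ∈ univ.filter (fun x => ℓ x = univ.sup' univ_nonempty ℓ), μ x)
          (∑ x ∈ univ.filter (fun x => ℓ x = univ.inf' univ_nonempty ℓ), μ x)) :
    let ℓmax := univ.sup' univ_nonempty ℓ
    let ℓmin := univ.inf' univ_nonempty ℓ
    let pA := ∑ x ∈ univ.filter (fun x => ℓ x = ℓmax), μ x
    let pB := ∑ x ∈ univ.filter (fun x => ℓ x = ℓmin), μ x
    let νstar : S → ℝ := fun x =>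
      if ℓ x = ℓmax then
        (if 0 < pA then μ x + R / 2 * μ x / pA
         else μ x + (if x = x0 then R / 2 else 0))
      else if ℓ x = ℓmin then μ x - R / 2 * μ x / pB
      else μ x
    (∀ x, 0 ≤ νstar x) ∧ (∑ x, νstar x = 1) ∧
      (∑ x, |νstar x - μ x| = R) ∧
      (∑ x, ℓ x * νstar x = R / 2 * (ℓmax - ℓmin) + ∑ x, ℓ x * μ x) := by
  intro ℓmax ℓmin pA pB νstar
  set L := ℓmax with hL
  set M := ℓmin with hM
  -- M < L
  have hML : M < L := by
    obtain ⟨x, y, hxy⟩ := hnc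
    rcases lt_or_ge (ℓ x) (ℓ y) with h | h
    · exact lt_of_le_of_lt (inf'_le ℓ (mem_univ x)) (lt_of_lt_of_le h (le_sup' ℓ (mem_univ y)))
    · have h' : ℓ y < ℓ x := lt_of_le_of_ne h (fun e => hxy e.symm)
      exact lt_of_le_of_lt (inf'_le ℓ (mem_univ y)) (lt_of_lt_of_le h' (le_sup' ℓ (mem_univ x)))
  set A := univ.filter (fun x => ℓ x = L) with hA
  set B := univ.filter (fun x => ℓ x = M) with hB
  set C := (univ.filter (fun x => ¬ ℓ x = L)).filter (fun x => ¬ ℓ x = M) with hC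
  have hBeq : (univ.filter (fun x => ¬ ℓ x = L)).filter (fun x => ℓ x = M) = B := by
    ext x
    simp only [hB, mem_filter, mem_univ, true_and]
    constructor
    · exact fun h => h.2
    · exact fun h => ⟨fun hl => hML.ne (h ▸ hl), h⟩
  have hpA0 : 0 ≤ pA := sum_nonneg fun x _ => hμ0 x
  have hpB0 : 0 ≤ pB := sum_nonneg fun x _ => hμ0 x
  have hRB : R / 2 ≤ pB := le_trans hR (min_le_right _ _)
  have hsplit : ∀ F : S → ℝ,
      ∑ x, F x = ∑ x ∈ A, F x + (∑ x ∈ B, F x + ∑ x ∈ C, F x) := by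
    intro F
    rw [← Finset.sum_filter_add_sum_filter_not univ (fun x => ℓ x = L) F,
        ← Finset.sum_filter_add_sum_filter_not (univ.filter (fun x => ¬ ℓ x = L))
          (fun x => ℓ x = M) F, hBeq]
  -- key sums
  have hgA : ∑ x ∈ A, (if 0 < pA then R / 2 * μ x / pA else if x = x0 then R / 2 else 0)
      = R / 2 := by
    by_cases h : 0 < pA
    · simp only [h, if_true]
      have : ∀ x ∈ A, R / 2 * μ x / pA = R / 2 / pA * μ x := by intros; ring
      rw [Finset.sum_congr rfl this, ← Finset.mul_sum]
      have hpa : ∑ i ∈ A, μ i = pA := rfl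
      rw [hpa]
      field_simp
    · simp only [h, if_false]
      rw [Finset.sum_ite_eq' A x0 (fun _ => R / 2)]
      have hx0A : x0 ∈ A := by simp [hA, hx0]; rfl
      simp [hx0A]
  have hgB : ∑ x ∈ B, R / 2 * μ x / pB = R / 2 := by
    rcases lt_or_eq_of_le hpB0 with h | h
    · have : ∀ x ∈ B, R / 2 * μ x / pB = R / 2 / pB * μ x := by intros; ring
      rw [Finset.sum_congr rfl this, ← Finset.mul_sum]
      have hpb : ∑ i ∈ B, μ i = pB := rfl
      rw [hpb]
      field_simp
    · have hR0' : R = 0 := le_antisymm (by linarith) hR0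
      simp [hR0']
  -- pointwise forms
  have hνA : ∀ x ∈ A, νstar x = μ x + (if 0 < pA then R / 2 * μ x / pA else if x = x0 then R / 2 else 0) := by
    intro x hx
    have hxL : ℓ x = L := (mem_filter.mp hx).2
    have hxL' : ℓ x = ℓmax := hxL
    simp only [νstar]
    rw [if_pos hxL']
    split_ifs <;> ring
  have hνB : ∀ x ∈ B, νstar x = μ x - R / 2 * μ x / pB := by
    intro x hx
    have hxM : ℓ x = M := (mem_filter.mp hx).2
    have hxL : ¬ ℓ x = ℓmax := fun hl => hML.ne (hxM ▸ hl)
    have hxM' : ℓ x = ℓmin := hxM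
    simp only [νstar]
    rw [if_neg hxL, if_pos hxM']
  have hνC : ∀ x ∈ C, νstar x = μ x := by
    intro x hx
    have h1 : ¬ ℓ x = ℓmin := (mem_filter.mp hx).2
    have h2 : ¬ ℓ x = ℓmax := (mem_filter.mp (mem_filter.mp hx).1).2
    simp only [νstar]
    rw [if_neg h2, if_neg h1]
  -- nonnegativity pieces needed for abs
  have hBsub : ∀ x ∈ B, 0 ≤ μ x - R / 2 * μ x / pB ∧ 0 ≤ R / 2 * μ x / pB := by
    intro x hx
    rcases lt_or_eq_of_le hpB0 with h | h
    · have hμx : μ x ≤ pB := Finset.single_le_sum (fun y _ => hμ0 y) hx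
      constructor
      · rw [sub_nonneg, div_le_iff₀ h]
        nlinarith [hμ0 x, hR0]
      · exact div_nonneg (mul_nonneg (by linarith) (hμ0 x)) h.le
    · have hR0' : R = 0 := le_antisymm (by linarith) hR0
      simp [hR0', hμ0 x]
  have hgA0 : ∀ x, 0 ≤ (if 0 < pA then R / 2 * μ x / pA else if x = x0 then R / 2 else 0) := by
    intro x
    by_cases h : 0 < pA
    · simp only [h, if_true]
      exact div_nonneg (mul_nonneg (by linarith) (hμ0 x)) hpA0
    · simp only [h, if_false]; split
      · linarith
      · exact le_refl 0
  refine ⟨?_, ?_, ?_, ?_⟩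
  · intro x
    by_cases h1 : ℓ x = L
    · have hxA : x ∈ A := by simp [hA, h1]
      rw [hνA x hxA]
      have := hgA0 x
      have := hμ0 x
      linarith
    · by_cases h2 : ℓ x = M
      · have hxB : x ∈ B := by simp [hB, h2]
        rw [hνB x hxB]
        exact (hBsub x hxB).1
      · simp [νstar, show ¬ ℓ x = ℓmax from h1, show ¬ ℓ x = ℓmin from h2, hμ0 x]
  · rw [hsplit νstar, Finset.sum_congr rfl hνA, Finset.sum_congr rfl hνB,
      Finset.sum_congr rfl hνC, Finset.sum_add_distrib, Finset.sum_sub_distrib, hgA, hgB]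
    have := hsplit μ
    linarith [hμ1, this]
  · have e1 : ∑ x ∈ A, |νstar x - μ x| = R / 2 := by
      rw [← hgA]
      refine Finset.sum_congr rfl fun x hx => ?_
      rw [hνA x hx]
      rw [add_sub_cancel_left, abs_of_nonneg (hgA0 x)]
    have e2 : ∑ x ∈ B, |νstar x - μ x| = R / 2 := by
      rw [← hgB]
      refine Finset.sum_congr rfl fun x hx => ?_
      rw [hνB x hx]
      rw [sub_sub_cancel_left, abs_neg, abs_of_nonneg (hBsub x hx).2]
    have e3 : ∑ x ∈ C, |νstar x - μ x| = 0 := by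
      refine Finset.sum_eq_zero fun x hx => ?_
      rw [hνC x hx]; simp
    rw [hsplit (fun x => |νstar x - μ x|), e1, e2, e3]
    ring
  · have e1 : ∑ x ∈ A, ℓ x * νstar x = ∑ x ∈ A, ℓ x * μ x + L * (R / 2) := by
      have : ∀ x ∈ A, ℓ x * νstar x = ℓ x * μ x + L * (if 0 < pA then R / 2 * μ x / pA else if x = x0 then R / 2 else 0) := by
        intro x hx
        have hxL : ℓ x = L := (mem_filter.mp hx).2
        rw [hνA x hx, hxL]; ring
      rw [Finset.sum_congr rfl this, Finset.sum_add_distrib, ← Finset.mul_sum, hgA]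
    have e2 : ∑ x ∈ B, ℓ x * νstar x = ∑ x ∈ B, ℓ x * μ x - M * (R / 2) := by
      have : ∀ x ∈ B, ℓ x * νstar x = ℓ x * μ x - M * (R / 2 * μ x / pB) := by
        intro x hx
        have hxM : ℓ x = M := (mem_filter.mp hx).2
        rw [hνB x hx, hxM]; ring
      rw [Finset.sum_congr rfl this, Finset.sum_sub_distrib, ← Finset.mul_sum, hgB]
    have e3 : ∑ x ∈ C, ℓ x * νstar x = ∑ x ∈ C, ℓ x * μ x := by
      exact Finset.sum_congr rfl fun x hx => by rw [hνC x hx]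
    rw [hsplit (fun x => ℓ x * νstar x), e1, e2, e3]
    have := hsplit (fun x => ℓ x * μ x)
    rw [this]
    ring
end

section
/- Under the assumptions of the contraction property of the total-variation robust dynamic programming operator T (finite X, U, bounded non-negative cost f, discount α ∈ (0,1), R ∈ [0,2]), the equation v(x) = min_{u∈U(x)} { f(x,u) + α Σ_z v(z) Q⁰(z|x,u) + α(R/2)(max_z v(z) − min_z v(z)) } has a unique solution v : X → ℝ. -/
open Finset

/-- The robust dynamic programming equation has a unique solution `v : X → ℝ`. -/
theorem robust_dp_unique_solution {X U : Type*} [Fintype X] [Nonempty X] [Fintype U]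
    (Ufeas : X → Finset U) (hU : ∀ x, (Ufeas x).Nonempty)
    (f : X → U → ℝ) (M : ℝ) (hf0 : ∀ x u, 0 ≤ f x u) (hfM : ∀ x u, f x u ≤ M)
    (Q : X → U → X → ℝ) (hQ0 : ∀ x u z, 0 ≤ Q x u z) (hQ1 : ∀ x u, ∑ z, Q x u z = 1)
    (R α : ℝ) (hR0 : 0 ≤ R) (hR2 : R ≤ 2) (hα0 : 0 < α) (hα1 : α < 1) :
    ∃! v : X → ℝ, ∀ x, v x = (Ufeas x).inf' (hU x) (fun u =>
      f x u + α * ∑ z, v z * Q x u z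
        + α * (R / 2) * (univ.sup' univ_nonempty v - univ.inf' univ_nonempty v)) := by
  classical
  obtain ⟨x₀⟩ := ‹Nonempty X›
  -- the span seminorm
  set sp : (X → ℝ) → ℝ := fun g => univ.sup' univ_nonempty g - univ.inf' univ_nonempty g
    with hsp_def
  -- the DP operator
  set T : (X → ℝ) → (X → ℝ) := fun v x => (Ufeas x).inf' (hU x) (fun u =>
      f x u + α * ∑ z, v z * Q x u z
        + α * (R / 2) * (univ.sup' univ_nonempty v - univ.inf' univ_nonempty v)) with hT_def
  have hT : ∀ v x, T v x = (Ufeas x).inf' (hU x) (fun u =>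
      f x u + α * ∑ z, v z * Q x u z + α * (R / 2) * sp v) := fun v x => rfl
  -- shifting lemmas for sup'/inf'
  have sup_add : ∀ (g : X → ℝ) (c : ℝ),
      univ.sup' univ_nonempty (fun x => g x + c) = univ.sup' univ_nonempty g + c := by
    intro g c
    apply le_antisymm
    · exact Finset.sup'_le _ _ fun x _ => add_le_add_left (Finset.le_sup' g (mem_univ x)) c
    · obtain ⟨x, _, hx⟩ := Finset.exists_mem_eq_sup' univ_nonempty g
      rw [hx]
      exact Finset.le_sup' (fun x => g x + c) (mem_univ x)
  have inf_addX : ∀ (s : Finset X) (hs : s.Nonempty) (g : X → ℝ) (c : ℝ),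
      s.inf' hs (fun x => g x + c) = s.inf' hs g + c := by
    intro s hs g c
    apply le_antisymm
    · obtain ⟨x, hxs, hx⟩ := Finset.exists_mem_eq_inf' hs g
      rw [hx]
      exact Finset.inf'_le (fun x => g x + c) hxs
    · exact Finset.le_inf' _ _ fun x hx => add_le_add_left (Finset.inf'_le g hx) c
  have inf_addU : ∀ (s : Finset U) (hs : s.Nonempty) (g : U → ℝ) (c : ℝ),
      s.inf' hs (fun x => g x + c) = s.inf' hs g + c := by
    intro s hs g c
    apply le_antisymm
    · obtain ⟨x, hxs, hx⟩ := Finset.exists_mem_eq_inf' hs g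
      rw [hx]
      exact Finset.inf'_le (fun x => g x + c) hxs
    · exact Finset.le_inf' _ _ fun x hx => add_le_add_left (Finset.inf'_le g hx) c
  have sp_add : ∀ (g : X → ℝ) (c : ℝ), sp (fun x => g x + c) = sp g := by
    intro g c
    show univ.sup' univ_nonempty (fun x => g x + c) - univ.inf' univ_nonempty (fun x => g x + c)
      = univ.sup' univ_nonempty g - univ.inf' univ_nonempty g
    rw [sup_add g c, inf_addX univ univ_nonempty g c]
    ring
  have sp_nonneg : ∀ g : X → ℝ, 0 ≤ sp g := by
    intro g
    have h1 : univ.inf' univ_nonempty g ≤ g x₀ := Finset.inf'_le g (mem_univ x₀)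
    have h2 : g x₀ ≤ univ.sup' univ_nonempty g := Finset.le_sup' g (mem_univ x₀)
    simp only [hsp_def]; linarith
  -- T commutes with adding constants
  have Tshift : ∀ (v : X → ℝ) (c : ℝ), T (fun z => v z + c) = fun x => T v x + α * c := by
    intro v c
    funext x
    have hsum : ∀ u, ∑ z, (v z + c) * Q x u z = (∑ z, v z * Q x u z) + c := by
      intro u
      simp only [add_mul]
      rw [Finset.sum_add_distrib, ← Finset.mul_sum, hQ1, mul_one]
    rw [hT, hT]
    rw [show (fun u => f x u + α * ∑ z, (v z + c) * Q x u z + α * (R / 2) * sp (fun z => v z + c))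
        = (fun u => (f x u + α * ∑ z, v z * Q x u z + α * (R / 2) * sp v) + α * c) from
      funext fun u => by rw [hsum u, sp_add]; ring]
    exact inf_addU _ _ _ _
  -- difference bounds
  have Tdiff_le : ∀ (v w : X → ℝ) (x : X), T v x - T w x ≤
      α * univ.sup' univ_nonempty (fun z => v z - w z) + α * (R / 2) * (sp v - sp w) := by
    intro v w x
    obtain ⟨u, hu, hwu⟩ := Finset.exists_mem_eq_inf' (hU x)
      (fun u => f x u + α * ∑ z, w z * Q x u z + α * (R / 2) * sp w)
    have h1 : T v x ≤ f x u + α * ∑ z, v z * Q x u z + α * (R / 2) * sp v := by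
      rw [hT]; exact Finset.inf'_le _ hu
    have h2 : T w x = f x u + α * ∑ z, w z * Q x u z + α * (R / 2) * sp w := by
      rw [hT]; exact hwu
    have hsum : (∑ z, v z * Q x u z) - ∑ z, w z * Q x u z ≤
        univ.sup' univ_nonempty (fun z => v z - w z) := by
      rw [← Finset.sum_sub_distrib]
      calc ∑ z, (v z * Q x u z - w z * Q x u z)
          = ∑ z, (v z - w z) * Q x u z := by
            exact Finset.sum_congr rfl fun z _ => by ring
        _ ≤ ∑ z, univ.sup' univ_nonempty (fun z => v z - w z) * Q x u z :=
            Finset.sum_le_sum fun z _ => mul_le_mul_of_nonneg_right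
              (Finset.le_sup' (fun z => v z - w z) (mem_univ z)) (hQ0 x u z)
        _ = univ.sup' univ_nonempty (fun z => v z - w z) := by
            rw [← Finset.mul_sum, hQ1, mul_one]
    nlinarith [mul_le_mul_of_nonneg_left hsum hα0.le]
  have Tdiff_ge : ∀ (v w : X → ℝ) (x : X),
      α * univ.inf' univ_nonempty (fun z => v z - w z) + α * (R / 2) * (sp v - sp w)
        ≤ T v x - T w x := by
    intro v w x
    obtain ⟨u, hu, hvu⟩ := Finset.exists_mem_eq_inf' (hU x)
      (fun u => f x u + α * ∑ z, v z * Q x u z + α * (R / 2) * sp v)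
    have h1 : T w x ≤ f x u + α * ∑ z, w z * Q x u z + α * (R / 2) * sp w := by
      rw [hT]; exact Finset.inf'_le _ hu
    have h2 : T v x = f x u + α * ∑ z, v z * Q x u z + α * (R / 2) * sp v := by
      rw [hT]; exact hvu
    have hsum : univ.inf' univ_nonempty (fun z => v z - w z) ≤
        (∑ z, v z * Q x u z) - ∑ z, w z * Q x u z := by
      rw [← Finset.sum_sub_distrib]
      calc univ.inf' univ_nonempty (fun z => v z - w z)
          = ∑ z, univ.inf' univ_nonempty (fun z => v z - w z) * Q x u z := by
            rw [← Finset.mul_sum, hQ1, mul_one]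
        _ ≤ ∑ z, (v z - w z) * Q x u z :=
            Finset.sum_le_sum fun z _ => mul_le_mul_of_nonneg_right
              (Finset.inf'_le (fun z => v z - w z) (mem_univ z)) (hQ0 x u z)
        _ = ∑ z, (v z * Q x u z - w z * Q x u z) :=
            Finset.sum_congr rfl fun z _ => by ring
    nlinarith [mul_le_mul_of_nonneg_left hsum hα0.le]
  -- span contraction
  have sp_T : ∀ v w : X → ℝ, sp (fun x => T v x - T w x) ≤ α * sp (fun x => v x - w x) := by
    intro v w
    have h1 : univ.sup' univ_nonempty (fun x => T v x - T w x) ≤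
        α * univ.sup' univ_nonempty (fun z => v z - w z) + α * (R / 2) * (sp v - sp w) :=
      Finset.sup'_le _ _ fun x _ => Tdiff_le v w x
    have h2 : α * univ.inf' univ_nonempty (fun z => v z - w z) + α * (R / 2) * (sp v - sp w)
        ≤ univ.inf' univ_nonempty (fun x => T v x - T w x) :=
      Finset.le_inf' _ _ fun x _ => Tdiff_ge v w x
    simp only [hsp_def] at *
    linarith
  -- the normalized operator
  set F : (X → ℝ) → (X → ℝ) := fun v x => T v x - T v x₀ with hF_def
  have hFsub : ∀ (v w : X → ℝ), (fun x => F v x - F w x)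
      = fun x => (T v x - T w x) + (-(T v x₀ - T w x₀)) := by
    intro v w; funext x; simp only [hF_def]; ring
  have sp_F : ∀ v w : X → ℝ, sp (fun x => F v x - F w x) ≤ α * sp (fun x => v x - w x) := by
    intro v w
    rw [hFsub, sp_add]
    exact sp_T v w
  have Fdiff : ∀ (v w : X → ℝ) (x : X), |F v x - F w x| ≤ α * sp (fun z => v z - w z) := by
    intro v w x
    have h1 : F v x - F w x ≤ sp (fun x => F v x - F w x) := by
      have ha : F v x - F w x ≤ univ.sup' univ_nonempty (fun x => F v x - F w x) :=
        Finset.le_sup' (fun x => F v x - F w x) (mem_univ x)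
      have hb : univ.inf' univ_nonempty (fun x => F v x - F w x) ≤ F v x₀ - F w x₀ :=
        Finset.inf'_le (fun x => F v x - F w x) (mem_univ x₀)
      have hc : F v x₀ - F w x₀ = 0 := by simp [hF_def]
      simp only [hsp_def]; linarith
    have h2 : -(F v x - F w x) ≤ sp (fun x => F v x - F w x) := by
      have ha : univ.inf' univ_nonempty (fun x => F v x - F w x) ≤ F v x - F w x :=
        Finset.inf'_le (fun x => F v x - F w x) (mem_univ x)
      have hb : F v x₀ - F w x₀ ≤ univ.sup' univ_nonempty (fun x => F v x - F w x) :=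
        Finset.le_sup' (fun x => F v x - F w x) (mem_univ x₀)
      have hc : F v x₀ - F w x₀ = 0 := by simp [hF_def]
      simp only [hsp_def]; linarith
    have := sp_F v w
    rw [abs_le]
    constructor <;> linarith
  -- iterate span bound
  have sp_iter : ∀ (n : ℕ) (v w : X → ℝ),
      sp (fun x => F^[n] v x - F^[n] w x) ≤ α ^ n * sp (fun x => v x - w x) := by
    intro n
    induction n with
    | zero => intro v w; simp
    | succ n ih =>
      intro v w
      rw [Function.iterate_succ_apply', Function.iterate_succ_apply']
      calc sp (fun x => F (F^[n] v) x - F (F^[n] w) x)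
          ≤ α * sp (fun x => F^[n] v x - F^[n] w x) := sp_F _ _
        _ ≤ α * (α ^ n * sp (fun x => v x - w x)) :=
            mul_le_mul_of_nonneg_left (ih v w) hα0.le
        _ = α ^ (n + 1) * sp (fun x => v x - w x) := by ring
  -- span vs sup distance
  have sp_le_dist : ∀ v w : X → ℝ, sp (fun x => v x - w x) ≤ 2 * dist v w := by
    intro v w
    have h1 : univ.sup' univ_nonempty (fun x => v x - w x) ≤ dist v w := by
      apply Finset.sup'_le
      intro x _
      have hd := dist_le_pi_dist v w x
      rw [Real.dist_eq] at hd
      linarith [(abs_le.mp hd).2]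
    have h2 : -(dist v w) ≤ univ.inf' univ_nonempty (fun x => v x - w x) := by
      apply Finset.le_inf'
      intro x _
      have hd := dist_le_pi_dist v w x
      rw [Real.dist_eq] at hd
      have := (abs_le.mp hd).1
      linarith
    simp only [hsp_def]; linarith
  -- choose an iterate that is a contraction
  obtain ⟨n, hn⟩ : ∃ n : ℕ, α ^ n < 1 / 2 := exists_pow_lt_of_lt_one one_half_pos hα1
  have hpow_pos : (0:ℝ) < α ^ (n + 1) := pow_pos hα0 _
  set K : NNReal := ⟨2 * α ^ (n + 1), by positivity⟩ with hK_def
  have hK1 : K < 1 := by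
    rw [← NNReal.coe_lt_coe]
    have : α ^ (n + 1) ≤ α ^ n := pow_le_pow_of_le_one hα0.le hα1.le (by omega)
    push_cast
    simp only [hK_def, NNReal.coe_mk]
    change 2 * α ^ (n + 1) < 1
    linarith
  have hlip : ∀ v w : X → ℝ, dist (F^[n+1] v) (F^[n+1] w) ≤ (K : ℝ) * dist v w := by
    intro v w
    rw [dist_pi_le_iff (by positivity)]
    intro x
    rw [Function.iterate_succ_apply', Function.iterate_succ_apply']
    rw [Real.dist_eq]
    calc |F (F^[n] v) x - F (F^[n] w) x|
        ≤ α * sp (fun z => F^[n] v z - F^[n] w z) := Fdiff _ _ x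
      _ ≤ α * (α ^ n * sp (fun z => v z - w z)) :=
          mul_le_mul_of_nonneg_left (sp_iter n v w) hα0.le
      _ ≤ α * (α ^ n * (2 * dist v w)) := by
          have h1 : sp (fun z => v z - w z) ≤ 2 * dist v w := sp_le_dist v w
          have h2 : (0:ℝ) ≤ α * α ^ n := by positivity
          nlinarith
      _ = (K : ℝ) * dist v w := by
          simp only [hK_def, NNReal.coe_mk]
          show α * (α ^ n * (2 * dist v w)) = 2 * α ^ (n + 1) * dist v w
          ring
  have hcontr : ContractingWith K (F^[n+1]) :=
    ⟨hK1, LipschitzWith.of_dist_le_mul hlip⟩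
  set v : X → ℝ := hcontr.fixedPoint (F^[n+1]) with hv_def
  have hFv : F v = v := hcontr.isFixedPt_fixedPoint_iterate
  -- build the actual fixed point of T
  have hTv : ∀ x, T v x = v x + T v x₀ := by
    intro x
    have := congrFun hFv x
    simp only [hF_def] at this
    linarith
  set c : ℝ := T v x₀ / (1 - α) with hc_def
  set vstar : X → ℝ := fun x => v x + c with hvstar_def
  have h1α : (1:ℝ) - α ≠ 0 := by linarith
  have hstar : ∀ x, T vstar x = vstar x := by
    intro x
    have h := congrFun (Tshift v c) x
    simp only [hvstar_def]
    rw [h, hTv x]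
    have : T v x₀ + α * c = c := by
      rw [hc_def]; field_simp; ring
    linarith
  refine ⟨vstar, fun x => (hstar x).symm, ?_⟩
  -- uniqueness
  intro w hw
  have hwT : ∀ x, T w x = w x := fun x => (hw x).symm
  have hspz : sp (fun x => w x - vstar x) = 0 := by
    have h1 : sp (fun x => T w x - T vstar x) ≤ α * sp (fun x => w x - vstar x) := sp_T w vstar
    have h2 : (fun x => T w x - T vstar x) = fun x => w x - vstar x := by
      funext x; rw [hwT x, hstar x]
    rw [h2] at h1
    have h3 := sp_nonneg (fun x => w x - vstar x)
    nlinarith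
  have hconst : ∀ x, w x - vstar x = w x₀ - vstar x₀ := by
    intro x
    have ha : w x - vstar x ≤ univ.sup' univ_nonempty (fun x => w x - vstar x) :=
      Finset.le_sup' (fun x => w x - vstar x) (mem_univ x)
    have hb : univ.inf' univ_nonempty (fun x => w x - vstar x) ≤ w x - vstar x :=
      Finset.inf'_le (fun x => w x - vstar x) (mem_univ x)
    have ha0 : w x₀ - vstar x₀ ≤ univ.sup' univ_nonempty (fun x => w x - vstar x) :=
      Finset.le_sup' (fun x => w x - vstar x) (mem_univ x₀)
    have hb0 : univ.inf' univ_nonempty (fun x => w x - vstar x) ≤ w x₀ - vstar x₀ :=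
      Finset.inf'_le (fun x => w x - vstar x) (mem_univ x₀)
    simp only [hsp_def] at hspz
    linarith
  set k : ℝ := w x₀ - vstar x₀ with hk_def
  have hwk : w = fun x => vstar x + k := by
    funext x
    have := hconst x
    linarith
  have hk0 : k = 0 := by
    have h := congrFun (Tshift vstar k) x₀
    rw [← hwk] at h
    rw [hwT x₀, hstar x₀] at h
    have : w x₀ = vstar x₀ + k := by rw [hwk]
    rw [this] at h
    have : k = α * k := by linarith
    nlinarith [sq_nonneg k]
  funext x
  rw [hwk]
  simp [hk0]
end
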